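/- Bootstrap lemma (part 1): let f be a generalized function on [a,b] with values in a finite-dimensional real vector space V (an element of some D^k([a,b],V)). If the generalized derivative f' lies in D⁰([a,b],V), then f is represented by an L² function. -/

import Mathlib

open MeasureTheory

/-- `α` belongs to `C^k₀([a,b],E)`: it is `C^k` and its derivatives of order `≤ k`
vanish at `a` and `b`. -/
def MemCk0 (k : ℕ) (a b : ℝ) {E : Type*} [NormedAddCommGroup E] [NormedSpace ℝ E]
    (α : ℝ → E) : Prop :=
  ContDiff ℝ k α ∧ ∀ j ≤ k, iteratedDeriv j α a = 0 ∧ iteratedDeriv j α b = 0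

/-- The `C^k` norm of `α` on `[a,b]` is bounded by `K`. -/
def CkNormLe (k : ℕ) (a b : ℝ) {E : Type*} [NormedAddCommGroup E] [NormedSpace ℝ E]
    (α : ℝ → E) (K : ℝ) : Prop :=
  ∀ j ≤ k, ∀ t ∈ Set.Icc a b, ‖iteratedDeriv j α t‖ ≤ K

/-- `f` represents an element of `D^k([a,b],V)`, the continuous dual of
`C^k₀([a,b],V*)`. -/
structure IsDk (k : ℕ) (a b : ℝ) {V : Type*} [NormedAddCommGroup V] [NormedSpace ℝ V]
    (f : (ℝ → (V →L[ℝ] ℝ)) → ℝ) : Prop where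
  map_add : ∀ α β, MemCk0 k a b α → MemCk0 k a b β → f (α + β) = f α + f β
  map_smul : ∀ (c : ℝ) (α), MemCk0 k a b α → f (c • α) = c * f α
  bound : ∃ C : ℝ, ∀ α K, MemCk0 k a b α → CkNormLe k a b α K → |f α| ≤ C * K

section aux
variable {E F : Type*} [NormedAddCommGroup E] [NormedSpace ℝ E]
  [NormedAddCommGroup F] [NormedSpace ℝ F]
variable {k : ℕ} {a b : ℝ}

lemma iteratedDeriv_clm_comp (g : E →L[ℝ] F) {α : ℝ → E} {n i : ℕ} (h : ContDiff ℝ n α)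
    (hi : i ≤ n) (x : ℝ) : iteratedDeriv i (fun t => g (α t)) x = g (iteratedDeriv i α x) := by
  rw [iteratedDeriv_eq_iteratedFDeriv, iteratedDeriv_eq_iteratedFDeriv,
    show (fun t => g (α t)) = g ∘ α from rfl,
    g.iteratedFDeriv_comp_left (x := x) h.contDiffAt (by exact_mod_cast hi)]
  rfl

lemma iteratedDeriv_add' {n i : ℕ} {α β : ℝ → E} (hα : ContDiff ℝ n α) (hβ : ContDiff ℝ n β)
    (hi : i ≤ n) (x : ℝ) :
    iteratedDeriv i (α + β) x = iteratedDeriv i α x + iteratedDeriv i β x := by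
  rw [iteratedDeriv_eq_iteratedFDeriv, iteratedDeriv_eq_iteratedFDeriv,
    iteratedDeriv_eq_iteratedFDeriv,
    iteratedFDeriv_add_apply (hα.of_le (by exact_mod_cast hi)).contDiffAt (hβ.of_le (by exact_mod_cast hi)).contDiffAt]
  rfl

lemma iteratedDeriv_smul' {n i : ℕ} {α : ℝ → E} (hα : ContDiff ℝ n α) (c : ℝ)
    (hi : i ≤ n) (x : ℝ) :
    iteratedDeriv i (c • α) x = c • iteratedDeriv i α x := by
  rw [iteratedDeriv_eq_iteratedFDeriv, iteratedDeriv_eq_iteratedFDeriv,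
    iteratedFDeriv_const_smul_apply (hα.of_le (by exact_mod_cast hi)).contDiffAt]
  rfl

lemma MemCk0.add {α β : ℝ → E} (hα : MemCk0 k a b α) (hβ : MemCk0 k a b β) :
    MemCk0 k a b (α + β) := by
  refine ⟨hα.1.add hβ.1, fun j hj => ?_⟩
  rw [iteratedDeriv_add' hα.1 hβ.1 hj, iteratedDeriv_add' hα.1 hβ.1 hj,
    (hα.2 j hj).1, (hβ.2 j hj).1, (hα.2 j hj).2, (hβ.2 j hj).2]
  simp

lemma MemCk0.smul (c : ℝ) {α : ℝ → E} (hα : MemCk0 k a b α) : MemCk0 k a b (c • α) := by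
  refine ⟨hα.1.const_smul c, fun j hj => ?_⟩
  rw [iteratedDeriv_smul' hα.1 c hj, iteratedDeriv_smul' hα.1 c hj,
    (hα.2 j hj).1, (hα.2 j hj).2]
  simp

lemma MemCk0.zero : MemCk0 k a b (0 : ℝ → E) := by
  refine ⟨contDiff_const, fun j hj => ?_⟩
  have : iteratedDeriv j (0 : ℝ → E) = 0 := by
    funext x
    rw [iteratedDeriv_eq_iteratedFDeriv, show (0 : ℝ → E) = (fun _ : ℝ => (0:E)) from rfl,
      iteratedFDeriv_zero_fun]
    rfl
  simp [this]

lemma MemCk0.clm_comp (g : E →L[ℝ] F) {α : ℝ → E} (hα : MemCk0 k a b α) :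
    MemCk0 k a b (fun t => g (α t)) := by
  refine ⟨(g.contDiff.comp hα.1 : ContDiff ℝ k (g ∘ α)), fun j hj => ?_⟩
  rw [iteratedDeriv_clm_comp g hα.1 hj, iteratedDeriv_clm_comp g hα.1 hj,
    (hα.2 j hj).1, (hα.2 j hj).2]
  simp

end aux

section aux2
variable {E F : Type*} [NormedAddCommGroup E] [NormedSpace ℝ E]
  [NormedAddCommGroup F] [NormedSpace ℝ F]
variable {k : ℕ} {a b : ℝ}

lemma iteratedDeriv_zero_fun (j : ℕ) (x : ℝ) : iteratedDeriv j (0 : ℝ → E) x = 0 := by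
  rw [iteratedDeriv_eq_iteratedFDeriv, show (0 : ℝ → E) = (fun _ : ℝ => (0:E)) from rfl,
    iteratedFDeriv_zero_fun]
  rfl

lemma iteratedDeriv_eventually_zero {g : ℝ → E} {x : ℝ} (h : g =ᶠ[nhds x] 0) (j : ℕ) :
    iteratedDeriv j g x = 0 := by
  have H : ∀ j : ℕ, iteratedDeriv j g =ᶠ[nhds x] iteratedDeriv j (0 : ℝ → E) := by
    intro j
    induction j with
    | zero => simpa [iteratedDeriv_zero] using h
    | succ n ih =>
      rw [iteratedDeriv_succ, iteratedDeriv_succ]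
      exact ih.deriv
  rw [(H j).eq_of_nhds, iteratedDeriv_zero_fun]

lemma memCk0_of_tsupport {g : ℝ → E} (hg : ContDiff ℝ k g)
    (hsupp : tsupport g ⊆ Set.Ioo a b) : MemCk0 k a b g := by
  refine ⟨hg, fun j _ => ?_⟩
  have ha : g =ᶠ[nhds a] 0 := by
    rw [← notMem_tsupport_iff_eventuallyEq]
    exact fun h => absurd (hsupp h) (by simp)
  have hb : g =ᶠ[nhds b] 0 := by
    rw [← notMem_tsupport_iff_eventuallyEq]
    exact fun h => absurd (hsupp h) (by simp)
  exact ⟨iteratedDeriv_eventually_zero ha j, iteratedDeriv_eventually_zero hb j⟩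

lemma exists_bump (hab : a < b) : ∃ φ : ℝ → ℝ, (∀ n : ℕ, ContDiff ℝ n φ) ∧ (∀ t, 0 ≤ φ t) ∧
    tsupport φ ⊆ Set.Ioo a b ∧ (∫ t in a..b, φ t) = 1 := by
  have h3 : (0:ℝ) < (b - a) / 3 := by linarith
  have h4 : (0:ℝ) < (b - a) / 4 := by linarith
  let B : ContDiffBump ((a+b)/2) := ⟨(b-a)/4, (b-a)/3, h4, by linarith⟩
  refine ⟨B.normed volume, fun n => B.contDiff_normed, B.nonneg_normed, ?_, ?_⟩
  · rw [B.tsupport_normed_eq]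
    intro x hx
    simp only [Metric.mem_closedBall, Real.dist_eq] at hx
    have h1 := abs_le.1 hx
    constructor <;> [linarith [h1.1, show B.rOut = (b-a)/3 from rfl]; linarith [h1.2, show B.rOut = (b-a)/3 from rfl]]
  · rw [intervalIntegral.integral_eq_integral_of_support_subset]
    · exact B.integral_normed
    · refine subset_trans (subset_trans subset_closure ?_) Set.Ioo_subset_Ioc_self
      rw [← tsupport]
      rw [B.tsupport_normed_eq]
      intro x hx
      simp only [Metric.mem_closedBall, Real.dist_eq] at hx
      have h1 := abs_le.1 hx
      constructor <;> [linarith [h1.1, show B.rOut = (b-a)/3 from rfl]; linarith [h1.2, show B.rOut = (b-a)/3 from rfl]]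

end aux2

section aux3
variable {E F : Type*} [NormedAddCommGroup E] [NormedSpace ℝ E]
  [NormedAddCommGroup F] [NormedSpace ℝ F]
variable {k : ℕ} {a b : ℝ}

lemma exists_ckNormLe {g : ℝ → E} (hg : ContDiff ℝ k g) (a b : ℝ) :
    ∃ M : ℝ, 0 ≤ M ∧ CkNormLe k a b g M := by
  have h : ∀ j : ℕ, j ≤ k → ∃ Mj : ℝ, 0 ≤ Mj ∧ ∀ t ∈ Set.Icc a b, ‖iteratedDeriv j g t‖ ≤ Mj := by
    intro j hj
    have hc : Continuous fun t => ‖iteratedDeriv j g t‖ :=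
      (hg.continuous_iteratedDeriv j (by exact_mod_cast hj)).norm
    rcases (isCompact_Icc (a := a) (b := b)).exists_bound_of_continuousOn
      hc.continuousOn with ⟨Mj, hMj⟩
    exact ⟨max Mj 0, le_max_right _ _, fun t ht =>
      le_trans (by simpa using hMj t ht) (le_max_left _ _)⟩
  choose! M hM0 hM using h
  refine ⟨(Finset.range (k+1)).sup' ⟨0, by simp⟩ M, ?_, ?_⟩
  · exact le_trans (hM0 0 (Nat.zero_le k)) (Finset.le_sup' M (by simp))
  · intro j hj t ht
    exact le_trans (hM j hj t ht) (Finset.le_sup' M (by simp [Nat.lt_succ_iff, hj]))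

lemma primitive_spec [CompleteSpace E] {n : ℕ} {g : ℝ → E} (hg : ContDiff ℝ n g) (a : ℝ) :
    ContDiff ℝ (n+1) (fun t => ∫ s in a..t, g s) ∧
      deriv (fun t => ∫ s in a..t, g s) = g := by
  have hd : ∀ t : ℝ, HasDerivAt (fun u => ∫ s in a..u, g s) (g t) t :=
    fun t => (hg.continuous.integral_hasStrictDerivAt a t).hasDerivAt
  have hderiv : deriv (fun t => ∫ s in a..t, g s) = g := funext fun t => (hd t).deriv
  refine ⟨?_, hderiv⟩
  rw [contDiff_succ_iff_deriv]
  exact ⟨fun t => (hd t).differentiableAt, by simp, by rw [hderiv]; exact hg⟩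

end aux3


section dk
variable {V : Type*} [NormedAddCommGroup V] [NormedSpace ℝ V]
variable {k : ℕ} {a b : ℝ} {f : (ℝ → (V →L[ℝ] ℝ)) → ℝ}

lemma IsDk.zero (hf : IsDk k a b f) : f 0 = 0 := by
  have h := hf.map_smul 0 0 MemCk0.zero
  rw [zero_smul] at h
  simpa using h

set_option maxHeartbeats 1000000 in
lemma IsDk.L1_bound (hab : a < b) (hf : IsDk k a b f)
    (hf' : ∃ C : ℝ, ∀ (α : ℝ → (V →L[ℝ] ℝ)) (K : ℝ), MemCk0 (k + 1) a b α →
      (∀ t ∈ Set.Icc a b, ‖α t‖ ≤ K) → |f (deriv α)| ≤ C * K) :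
    ∃ C₁ : ℝ, 0 ≤ C₁ ∧ ∀ γ, MemCk0 k a b γ → |f γ| ≤ C₁ * ∫ t in a..b, ‖γ t‖ := by
  obtain ⟨C, hC⟩ := hf'
  obtain ⟨C₀, hC₀⟩ := hf.bound
  have hab' := hab.le
  have hzero : deriv (0 : ℝ → (V →L[ℝ] ℝ)) = 0 := by
    funext t; exact deriv_const t (0 : V →L[ℝ] ℝ)
  have hCKzero : CkNormLe k a b (0 : ℝ → (V →L[ℝ] ℝ)) 1 := by
    intro j hj t ht; rw [iteratedDeriv_zero_fun]; simp
  have hC0nn : 0 ≤ C₀ := by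
    have := hC₀ 0 1 MemCk0.zero hCKzero
    rw [hf.zero] at this; simpa using this
  have hCnn : 0 ≤ C := by
    have := hC 0 1 MemCk0.zero (fun t _ => by simp)
    rw [hzero, hf.zero] at this; simpa using this
  obtain ⟨φ, hφc, hφnn, hφsupp, hφint⟩ := exists_bump hab
  have hφmem : ∀ n : ℕ, MemCk0 n a b φ := fun n => memCk0_of_tsupport (hφc n) hφsupp
  obtain ⟨M, hM0, hM⟩ := exists_ckNormLe (hφc k) a b
  refine ⟨2*C + C₀*M, by positivity, ?_⟩
  intro γ hγ
  set I : V →L[ℝ] ℝ := ∫ s in a..b, γ s with hI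
  set δ : ℝ → (V →L[ℝ] ℝ) := fun t => γ t - φ t • I with hδdef
  have hγc : Continuous γ := hγ.1.continuous
  have hφIc : ContDiff ℝ k (fun t => φ t • I) := (hφc k).smul contDiff_const
  have hδc : ContDiff ℝ k δ := hγ.1.sub hφIc
  set A : ℝ → (V →L[ℝ] ℝ) := fun t => ∫ s in a..t, δ s with hAdef
  obtain ⟨hAc, hAd⟩ := primitive_spec hδc a
  have hφI : MemCk0 k a b (fun t => φ t • I) := by
    have h := (hφmem k).clm_comp (ContinuousLinearMap.toSpanSingleton ℝ I)
    simpa [ContinuousLinearMap.toSpanSingleton_apply] using h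
  have hδmem : MemCk0 k a b δ := by
    have hfun : δ = γ + (-1:ℝ) • (fun t => φ t • I) := by
      funext t; simp [hδdef, sub_eq_add_neg]
      module
    rw [hfun]
    exact hγ.add (hφI.smul (-1))
  have hAmem : MemCk0 (k+1) a b A := by
    refine ⟨hAc, fun j hj => ?_⟩
    cases j with
    | zero =>
      simp only [iteratedDeriv_zero]
      constructor
      · simp [hAdef]
      · have h1 : A b = (∫ s in a..b, γ s) - (∫ s in a..b, φ s) • I := by
          rw [hAdef]
          simp only [hδdef]
          rw [intervalIntegral.integral_sub (hγc.intervalIntegrable a b)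
            ((show Continuous (fun s => φ s • I) from ((hφc 0).continuous).smul continuous_const).intervalIntegrable a b),
            intervalIntegral.integral_smul_const]
        rw [h1, hφint, one_smul, ← hI, sub_self]
    | succ n =>
      have hn : n ≤ k := Nat.succ_le_succ_iff.mp hj
      refine ⟨?_, ?_⟩ <;> rw [iteratedDeriv_succ', hAd]
      · exact (hδmem.2 n hn).1
      · exact (hδmem.2 n hn).2
  have hInorm : ‖I‖ ≤ ∫ s in a..b, ‖γ s‖ := by
    rw [hI]; exact intervalIntegral.norm_integral_le_integral_norm hab'
  have hγnn : 0 ≤ ∫ s in a..b, ‖γ s‖ :=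
    intervalIntegral.integral_nonneg hab' (fun u _ => norm_nonneg _)
  have hδcont : Continuous fun s => ‖δ s‖ := hδc.continuous.norm
  have hAsup : ∀ t ∈ Set.Icc a b, ‖A t‖ ≤ 2 * ∫ s in a..b, ‖γ s‖ := by
    intro t ht
    have h1 : ‖A t‖ ≤ ∫ s in a..t, ‖δ s‖ :=
      intervalIntegral.norm_integral_le_integral_norm ht.1
    have h2 : (∫ s in a..t, ‖δ s‖) ≤ ∫ s in a..b, ‖δ s‖ :=
      intervalIntegral.integral_mono_interval le_rfl ht.1 ht.2
        (Filter.Eventually.of_forall fun s => norm_nonneg _)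
        (hδcont.intervalIntegrable a b)
    have h3 : (∫ s in a..b, ‖δ s‖) ≤ ∫ s in a..b, (‖γ s‖ + φ s * ‖I‖) := by
      apply intervalIntegral.integral_mono_on hab' (hδcont.intervalIntegrable a b)
        ((hγc.norm.add (((hφc 0).continuous).mul continuous_const)).intervalIntegrable a b)
      intro x _
      calc ‖γ x - φ x • I‖ ≤ ‖γ x‖ + ‖φ x • I‖ := norm_sub_le _ _
      _ ≤ ‖γ x‖ + φ x * ‖I‖ := by
          refine add_le_add le_rfl ?_
          refine le_trans (ContinuousLinearMap.opNorm_smul_le _ _) ?_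
          rw [Real.norm_eq_abs, abs_of_nonneg (hφnn x)]
    have h4 : (∫ s in a..b, (‖γ s‖ + φ s * ‖I‖))
        = (∫ s in a..b, ‖γ s‖) + (∫ s in a..b, φ s) * ‖I‖ := by
      rw [intervalIntegral.integral_add (hγc.norm.intervalIntegrable a b)
        ((show Continuous (fun s => φ s * ‖I‖) from ((hφc 0).continuous).mul continuous_const).intervalIntegrable a b),
        intervalIntegral.integral_mul_const]
    rw [hφint, one_mul] at h4
    calc ‖A t‖ ≤ ∫ s in a..t, ‖δ s‖ := h1
    _ ≤ ∫ s in a..b, ‖δ s‖ := h2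
    _ ≤ (∫ s in a..b, ‖γ s‖) + ‖I‖ := by rw [← h4]; exact h3
    _ ≤ 2 * ∫ s in a..b, ‖γ s‖ := by linarith
  have hgdecomp : γ = δ + fun t => φ t • I := by
    funext t; simp [hδdef]
  have h5 : f γ = f δ + f (fun t => φ t • I) := by
    rw [hgdecomp]; exact hf.map_add _ _ hδmem hφI
  have h6 : |f δ| ≤ C * (2 * ∫ s in a..b, ‖γ s‖) := by
    have h := hC A (2 * ∫ s in a..b, ‖γ s‖) hAmem hAsup
    rwa [hAd] at h
  have h7 : |f (fun t => φ t • I)| ≤ C₀ * (M * ‖I‖) := by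
    apply hC₀ _ _ hφI
    intro j hj t ht
    have hit : iteratedDeriv j (fun t => φ t • I) t = (iteratedDeriv j φ t) • I := by
      have h := iteratedDeriv_clm_comp (ContinuousLinearMap.toSpanSingleton ℝ I) (hφc k) hj t
      simpa [ContinuousLinearMap.toSpanSingleton_apply] using h
    rw [hit]
    refine le_trans (ContinuousLinearMap.opNorm_smul_le _ _) ?_
    exact mul_le_mul_of_nonneg_right (by simpa using hM j hj t ht) (norm_nonneg I)
  have h8 : C₀ * (M * ‖I‖) ≤ C₀ * M * ∫ s in a..b, ‖γ s‖ := by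
    rw [← mul_assoc]
    exact mul_le_mul_of_nonneg_left hInorm (by positivity)
  calc |f γ| ≤ |f δ| + |f (fun t => φ t • I)| := by rw [h5]; exact abs_add_le _ _
  _ ≤ C * (2 * ∫ s in a..b, ‖γ s‖) + C₀ * (M * ‖I‖) := add_le_add h6 h7
  _ ≤ (2*C + C₀*M) * ∫ s in a..b, ‖γ s‖ := by nlinarith [h8]

end dk

section wd
variable {V : Type*} [NormedAddCommGroup V] [NormedSpace ℝ V]
variable {k : ℕ} {a b : ℝ} {f : (ℝ → (V →L[ℝ] ℝ)) → ℝ}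

lemma IsDk.congr_Ioo (hf : IsDk k a b f) {γ₁ γ₂ : ℝ → (V →L[ℝ] ℝ)}
    (h₁ : MemCk0 k a b γ₁) (h₂ : MemCk0 k a b γ₂)
    (h : ∀ t ∈ Set.Ioo a b, γ₁ t = γ₂ t) : f γ₁ = f γ₂ := by
  obtain ⟨C₀, hC₀⟩ := hf.bound
  have hδ : MemCk0 k a b (γ₁ + (-1:ℝ) • γ₂) := h₁.add (h₂.smul _)
  have hnorm : CkNormLe k a b (γ₁ + (-1:ℝ) • γ₂) 0 := by
    intro j hj t ht
    by_cases hti : t ∈ Set.Ioo a b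
    · have hev : (γ₁ + (-1:ℝ) • γ₂) =ᶠ[nhds t] 0 := by
        filter_upwards [isOpen_Ioo.mem_nhds hti] with s hs
        simp [h s hs]
        module
      rw [iteratedDeriv_eventually_zero hev j]; simp
    · have ht' : t = a ∨ t = b := by
        rcases ht with ⟨h1', h2'⟩
        rcases eq_or_lt_of_le h1' with hh | hh
        · exact Or.inl hh.symm
        rcases eq_or_lt_of_le h2' with hh' | hh'
        · exact Or.inr hh'
        exact absurd ⟨hh, hh'⟩ hti
      rcases ht' with rfl | rfl
      · rw [(hδ.2 j hj).1]; simp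
      · rw [(hδ.2 j hj).2]; simp
  have h0 : f (γ₁ + (-1:ℝ) • γ₂) = 0 := by
    have hb := hC₀ _ 0 hδ hnorm
    rw [mul_zero] at hb
    exact abs_eq_zero.mp (le_antisymm hb (abs_nonneg _))
  have hsum : (γ₁ + (-1:ℝ) • γ₂) + γ₂ = γ₁ := by funext t; simp; module
  have h2 := hf.map_add _ _ hδ h₂
  rw [hsum, h0, zero_add] at h2
  exact h2

end wd

lemma eqOn_Ioo_of_ae {a b : ℝ} {ψ χ : ℝ → ℝ} (hψ : Continuous ψ) (hχ : Continuous χ)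
    (h : ψ =ᵐ[volume.restrict (Set.Icc a b)] χ) : ∀ t ∈ Set.Ioo a b, ψ t = χ t := by
  intro t ht
  by_contra hne
  set U := {s | ψ s ≠ χ s} ∩ Set.Ioo a b with hU
  have hUopen : IsOpen U := by
    refine IsOpen.inter ?_ isOpen_Ioo
    exact isOpen_ne_fun hψ hχ
  have hU0 : volume U = 0 := by
    have h1 : (volume.restrict (Set.Icc a b)) {s | ¬ ψ s = χ s} = 0 := ae_iff.mp h
    rw [Measure.restrict_apply' measurableSet_Icc] at h1
    exact measure_mono_null
      (Set.inter_subset_inter_right _ Set.Ioo_subset_Icc_self) h1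
  have hmem : t ∈ U := ⟨hne, ht⟩
  exact absurd hU0 (hUopen.measure_pos volume ⟨t, hmem⟩).ne'

section hilbert
variable {k : ℕ} {a b : ℝ}

set_option maxHeartbeats 1000000 in
lemma rep_exists (hab : a < b) (T : (ℝ → ℝ) → ℝ)
    (Tadd : ∀ ψ χ, MemCk0 k a b ψ → MemCk0 k a b χ → T (ψ + χ) = T ψ + T χ)
    (Tsmul : ∀ (c : ℝ) ψ, MemCk0 k a b ψ → T (c • ψ) = c * T ψ)
    (Twd : ∀ ψ χ, MemCk0 k a b ψ → MemCk0 k a b χ → (∀ t ∈ Set.Ioo a b, ψ t = χ t) → T ψ = T χ)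
    (Tbound : ∃ C : ℝ, 0 ≤ C ∧ ∀ ψ, MemCk0 k a b ψ → |T ψ| ≤ C * ∫ t in a..b, |ψ t|) :
    ∃ G : ℝ → ℝ, MemLp G 2 (volume.restrict (Set.Icc a b)) ∧
      ∀ ψ, MemCk0 k a b ψ →
        T ψ = ∫ t in Set.Icc a b, ψ t * G t ∂volume := by
  classical
  obtain ⟨C, hCnn, hC⟩ := Tbound
  set μ : Measure ℝ := volume.restrict (Set.Icc a b) with hμ
  haveI : IsFiniteMeasure μ := ⟨by
    rw [Measure.restrict_apply_univ]; exact measure_Icc_lt_top⟩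
  have hmem : ∀ ψ : ℝ → ℝ, Continuous ψ → MemLp ψ 2 μ := by
    intro ψ hψ
    rcases (isCompact_Icc (a := a) (b := b)).exists_bound_of_continuousOn
      hψ.continuousOn with ⟨Cb, hCb⟩
    refine MemLp.of_bound hψ.aestronglyMeasurable Cb ?_
    rw [hμ, ae_restrict_iff' measurableSet_Icc]
    exact Filter.Eventually.of_forall fun t ht => by simpa using hCb t ht
  -- the subspace of test functions
  let W : Submodule ℝ (Lp ℝ 2 μ) :=
    { carrier := {x | ∃ ψ : ℝ → ℝ, MemCk0 k a b ψ ∧ (x : ℝ → ℝ) =ᵐ[μ] ψ}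
      zero_mem' := ⟨0, MemCk0.zero, Lp.coeFn_zero ℝ 2 μ⟩
      add_mem' := by
        rintro x y ⟨ψ, hψ, hx⟩ ⟨χ, hχ, hy⟩
        exact ⟨ψ + χ, hψ.add hχ, (Lp.coeFn_add x y).trans (hx.add hy)⟩
      smul_mem' := by
        rintro c x ⟨ψ, hψ, hx⟩
        exact ⟨c • ψ, hψ.smul c, (Lp.coeFn_smul c x).trans (hx.const_smul c)⟩ }
  have hWmem : ∀ x : Lp ℝ 2 μ,
      x ∈ W ↔ ∃ ψ : ℝ → ℝ, MemCk0 k a b ψ ∧ (x : ℝ → ℝ) =ᵐ[μ] ψ := fun x => Iff.rfl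
  -- value of the functional
  let val : Lp ℝ 2 μ → ℝ := fun x =>
    if h : ∃ ψ : ℝ → ℝ, MemCk0 k a b ψ ∧ (x : ℝ → ℝ) =ᵐ[μ] ψ then T h.choose else 0
  have hval : ∀ (ψ : ℝ → ℝ), MemCk0 k a b ψ → ∀ x : Lp ℝ 2 μ,
      (x : ℝ → ℝ) =ᵐ[μ] ψ → val x = T ψ := by
    intro ψ hψ x hx
    have hex : ∃ χ : ℝ → ℝ, MemCk0 k a b χ ∧ (x : ℝ → ℝ) =ᵐ[μ] χ := ⟨ψ, hψ, hx⟩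
    simp only [val, dif_pos hex]
    refine Twd _ _ hex.choose_spec.1 hψ ?_
    exact eqOn_Ioo_of_ae hex.choose_spec.1.1.continuous hψ.1.continuous
      (hex.choose_spec.2.symm.trans hx)
  -- the norm bound
  let oneL : Lp ℝ 2 μ := (memLp_const (1:ℝ)).toLp _
  have hbound : ∀ x : Lp ℝ 2 μ, x ∈ W → |val x| ≤ (C * ‖oneL‖) * ‖x‖ := by
    rintro x ⟨ψ, hψ, hx⟩
    rw [hval ψ hψ x hx]
    have hψc : Continuous ψ := hψ.1.continuous
    have habs : Continuous fun t => |ψ t| := hψc.abs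
    -- interval integral to set integral
    have h1 : (∫ t in a..b, |ψ t|) = ∫ t, |ψ t| ∂μ := by
      rw [intervalIntegral.integral_of_le hab.le, hμ,
        MeasureTheory.integral_Icc_eq_integral_Ioc]
    -- inner product bound
    let u : Lp ℝ 2 μ := (hmem _ habs).toLp _
    have hu : (u : ℝ → ℝ) =ᵐ[μ] fun t => |ψ t| := MemLp.coeFn_toLp _
    have hone : (oneL : ℝ → ℝ) =ᵐ[μ] fun _ => (1:ℝ) := MemLp.coeFn_toLp _
    have h2 : (∫ t, |ψ t| ∂μ) = inner ℝ u oneL := by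
      rw [MeasureTheory.L2.inner_def]
      refine (integral_congr_ae ?_).symm
      filter_upwards [hu, hone] with t h1t h2t
      rw [RCLike.inner_apply, h1t, h2t]
      simp
    have h3 : inner ℝ u oneL ≤ ‖u‖ * ‖oneL‖ := real_inner_le_norm u oneL
    have h4 : ‖u‖ = ‖x‖ := by
      rw [Lp.norm_toLp, Lp.norm_def]
      congr 1
      rw [show (fun t => |ψ t|) = fun t => ‖ψ t‖ from rfl, eLpNorm_norm,
        eLpNorm_congr_ae hx]
    calc |T ψ| ≤ C * ∫ t in a..b, |ψ t| := hC ψ hψ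
    _ = C * inner ℝ u oneL := by rw [h1, h2]
    _ ≤ C * (‖u‖ * ‖oneL‖) := mul_le_mul_of_nonneg_left h3 hCnn
    _ = (C * ‖oneL‖) * ‖x‖ := by rw [h4]; ring
  -- the continuous linear functional on W
  let ℓ₀ : W →ₗ[ℝ] ℝ :=
    { toFun := fun x => val x.1
      map_add' := by
        rintro ⟨x, ψ, hψ, hx⟩ ⟨y, χ, hχ, hy⟩
        have hxy : ((x + y : Lp ℝ 2 μ) : ℝ → ℝ) =ᵐ[μ] ψ + χ :=
          (Lp.coeFn_add x y).trans (hx.add hy)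
        have e1 : val (x + y) = T (ψ + χ) := hval _ (hψ.add hχ) _ hxy
        have e2 : val x = T ψ := hval _ hψ _ hx
        have e3 : val y = T χ := hval _ hχ _ hy
        show val (x + y) = val x + val y
        rw [e1, e2, e3]
        exact Tadd _ _ hψ hχ
      map_smul' := by
        rintro c ⟨x, ψ, hψ, hx⟩
        have hcx : ((c • x : Lp ℝ 2 μ) : ℝ → ℝ) =ᵐ[μ] c • ψ :=
          (Lp.coeFn_smul c x).trans (hx.const_smul c)
        have e1 : val (c • x) = T (c • ψ) := hval _ (hψ.smul c) _ hcx
        have e2 : val x = T ψ := hval _ hψ _ hx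
        show val (c • x) = c • val x
        rw [e1, e2, smul_eq_mul]
        exact Tsmul c _ hψ }
  have hℓ₀bound : ∀ x : W, ‖ℓ₀ x‖ ≤ (C * ‖oneL‖) * ‖x‖ := by
    intro x
    rw [Real.norm_eq_abs]
    exact hbound x.1 x.2
  let ℓ : W →L[ℝ] ℝ := LinearMap.mkContinuous ℓ₀ (C * ‖oneL‖) hℓ₀bound
  obtain ⟨g, hg_ext, -⟩ := exists_extension_norm_eq W ℓ
  let G' : Lp ℝ 2 μ := (InnerProductSpace.toDual ℝ (Lp ℝ 2 μ)).symm g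
  have hG' : ∀ y : Lp ℝ 2 μ, (inner ℝ G' y : ℝ) = g y := fun y =>
    InnerProductSpace.toDual_symm_apply
  refine ⟨(G' : ℝ → ℝ), Lp.memLp G', ?_⟩
  intro ψ hψ
  have hψc : Continuous ψ := hψ.1.continuous
  let x : Lp ℝ 2 μ := (hmem ψ hψc).toLp ψ
  have hx : (x : ℝ → ℝ) =ᵐ[μ] ψ := MemLp.coeFn_toLp _
  have hxW : x ∈ W := ⟨ψ, hψ, hx⟩
  have e1 : T ψ = ℓ ⟨x, hxW⟩ := by
    change T ψ = val x
    rw [hval ψ hψ x hx]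
  have e2 : (ℓ ⟨x, hxW⟩ : ℝ) = g x := (hg_ext ⟨x, hxW⟩).symm
  have e3 : g x = inner ℝ G' x := (hG' x).symm
  have e4 : (inner ℝ G' x : ℝ) = ∫ t, ψ t * (G' : ℝ → ℝ) t ∂μ := by
    rw [MeasureTheory.L2.inner_def]
    refine integral_congr_ae ?_
    filter_upwards [hx] with t h1t
    rw [RCLike.inner_apply]
    simp [h1t, mul_comm]
  rw [e1, e2, e3, e4]

end hilbert

section helpers
variable {E : Type*} [NormedAddCommGroup E] [NormedSpace ℝ E]
variable {V : Type*} [NormedAddCommGroup V] [NormedSpace ℝ V]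
variable {k : ℕ} {a b : ℝ} {f : (ℝ → (V →L[ℝ] ℝ)) → ℝ}

lemma MemCk0.finset_sum {ι : Type*} (s : Finset ι) (g : ι → ℝ → E)
    (h : ∀ i ∈ s, MemCk0 k a b (g i)) : MemCk0 k a b (∑ i ∈ s, g i) := by
  classical
  induction s using Finset.induction_on with
  | empty => simpa using (MemCk0.zero : MemCk0 k a b (0 : ℝ → E))
  | insert _ _ hnotmem ih =>
    rw [Finset.sum_insert hnotmem]
    exact (h _ (Finset.mem_insert_self _ _)).add
      (ih fun i hi => h i (Finset.mem_insert_of_mem hi))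

lemma IsDk.map_sum (hf : IsDk k a b f) {ι : Type*} (s : Finset ι)
    (g : ι → ℝ → (V →L[ℝ] ℝ)) (h : ∀ i ∈ s, MemCk0 k a b (g i)) :
    f (∑ i ∈ s, g i) = ∑ i ∈ s, f (g i) := by
  classical
  induction s using Finset.induction_on with
  | empty => simpa using hf.zero
  | insert _ _ hnotmem ih =>
    rw [Finset.sum_insert hnotmem, Finset.sum_insert hnotmem,
      hf.map_add _ _ (h _ (Finset.mem_insert_self _ _))
        (MemCk0.finset_sum _ _ fun i hi => h i (Finset.mem_insert_of_mem hi)),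
      ih fun i hi => h i (Finset.mem_insert_of_mem hi)]

lemma memL2_Icc_of_continuous {ψ : ℝ → ℝ} (hψ : Continuous ψ) :
    MemLp ψ 2 (volume.restrict (Set.Icc a b)) := by
  haveI : IsFiniteMeasure (volume.restrict (Set.Icc a b)) := ⟨by
    rw [Measure.restrict_apply_univ]; exact measure_Icc_lt_top⟩
  rcases (isCompact_Icc (a := a) (b := b)).exists_bound_of_continuousOn
    hψ.continuousOn with ⟨Cb, hCb⟩
  refine MemLp.of_bound hψ.aestronglyMeasurable Cb ?_
  rw [ae_restrict_iff' measurableSet_Icc]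
  exact Filter.Eventually.of_forall fun t ht => by simpa using hCb t ht

lemma integrable_mul_of_memL2 {μ : Measure ℝ} {g h : ℝ → ℝ} (hg : MemLp g 2 μ)
    (hh : MemLp h 2 μ) : Integrable (fun t => g t * h t) μ := by
  have hi := MeasureTheory.L2.integrable_inner (𝕜 := ℝ) (hg.toLp g) (hh.toLp h)
  refine hi.congr ?_
  filter_upwards [hg.coeFn_toLp, hh.coeFn_toLp] with t h1 h2
  rw [RCLike.inner_apply, h1, h2]
  simp [mul_comm]

lemma memL2_smul_const {μ : Measure ℝ} {g : ℝ → ℝ} (hg : MemLp g 2 μ) (v : V) :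
    MemLp (fun t => g t • v) 2 μ := by
  refine MemLp.of_le_mul (c := ‖v‖) hg
    (hg.aestronglyMeasurable.smul aestronglyMeasurable_const) ?_
  refine Filter.Eventually.of_forall fun t => ?_
  rw [norm_smul, mul_comm]

end helpers


set_option maxHeartbeats 1000000 in
/-- bootstrap, part 1: if `f ∈ D^k([a,b],V)` has generalized derivative
`f' ∈ D⁰([a,b],V)` (i.e. `α ↦ −⟨f, α'⟩` is bounded in the sup norm on `C^{k+1}₀` test
functions), then `f` is represented by an `L²` function. -/
theorem bootstrap_deriv_D0_implies_L2
    (V : Type*) [NormedAddCommGroup V] [NormedSpace ℝ V] [FiniteDimensional ℝ V]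
    (a b : ℝ) (hab : a < b) (k : ℕ)
    (f : (ℝ → (V →L[ℝ] ℝ)) → ℝ) (hf : IsDk k a b f)
    (hf' : ∃ C : ℝ, ∀ (α : ℝ → (V →L[ℝ] ℝ)) (K : ℝ), MemCk0 (k + 1) a b α →
      (∀ t ∈ Set.Icc a b, ‖α t‖ ≤ K) → |f (deriv α)| ≤ C * K) :
    ∃ F : ℝ → V, MemLp F 2 (volume.restrict (Set.Icc a b)) ∧
      ∀ α, MemCk0 k a b α → f α = ∫ t in a..b, α t (F t) := by
  classical
  obtain ⟨C₁, hC₁nn, hC₁⟩ := hf.L1_bound hab hf'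
  set μ : Measure ℝ := volume.restrict (Set.Icc a b) with hμ
  let bV : Module.Basis (Fin (Module.finrank ℝ V)) ℝ V := Module.finBasis ℝ V
  let ε : Fin (Module.finrank ℝ V) → (V →L[ℝ] ℝ) :=
    fun i => LinearMap.toContinuousLinearMap (bV.coord i)
  have hsm : ∀ (i) (ψ : ℝ → ℝ), MemCk0 k a b ψ → MemCk0 k a b (fun t => ψ t • ε i) := by
    intro i ψ hψ
    have h := hψ.clm_comp (ContinuousLinearMap.toSpanSingleton ℝ (ε i))
    simpa [ContinuousLinearMap.toSpanSingleton_apply] using h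
  have hrep : ∀ i, ∃ G : ℝ → ℝ, MemLp G 2 μ ∧
      ∀ ψ, MemCk0 k a b ψ →
        f (fun t => ψ t • ε i) = ∫ t in Set.Icc a b, ψ t * G t ∂volume := by
    intro i
    apply rep_exists hab (fun ψ => f (fun t => ψ t • ε i))
    · intro ψ χ hψ hχ
      have h1 : (fun t => (ψ + χ) t • ε i)
          = (fun t => ψ t • ε i) + (fun t => χ t • ε i) := by
        funext t; simp [add_smul]
      rw [h1]
      exact hf.map_add _ _ (hsm i ψ hψ) (hsm i χ hχ)
    · intro c ψ hψ
      have h1 : (fun t => (c • ψ) t • ε i) = c • (fun t => ψ t • ε i) := by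
        funext t; simp [mul_smul]
      rw [h1]
      exact hf.map_smul _ _ (hsm i ψ hψ)
    · intro ψ χ hψ hχ h
      exact hf.congr_Ioo (hsm i ψ hψ) (hsm i χ hχ) (fun t ht => by simp [h t ht])
    · refine ⟨C₁ * ‖ε i‖, by positivity, ?_⟩
      intro ψ hψ
      refine le_trans (hC₁ _ (hsm i ψ hψ)) ?_
      have hψc : Continuous ψ := hψ.1.continuous
      have h2 : (∫ t in a..b, ‖ψ t • ε i‖) ≤ ∫ t in a..b, |ψ t| * ‖ε i‖ := by
        apply intervalIntegral.integral_mono_on hab.le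
          ((hψc.smul continuous_const).norm.intervalIntegrable a b)
          ((hψc.abs.mul continuous_const).intervalIntegrable a b)
        intro x _
        refine le_trans (ContinuousLinearMap.opNorm_smul_le _ _) ?_
        rw [Real.norm_eq_abs]
        exact le_rfl
      rw [intervalIntegral.integral_mul_const] at h2
      calc C₁ * ∫ t in a..b, ‖ψ t • ε i‖ ≤ C₁ * ((∫ t in a..b, |ψ t|) * ‖ε i‖) :=
        mul_le_mul_of_nonneg_left h2 hC₁nn
      _ = C₁ * ‖ε i‖ * ∫ t in a..b, |ψ t| := by ring
  choose G hG hGrep using hrep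
  refine ⟨fun t => ∑ i, G i t • bV i, ?_, ?_⟩
  · exact memLp_finset_sum Finset.univ fun i _ => memL2_smul_const (hG i) (bV i)
  · intro α hα
    set ψ : Fin (Module.finrank ℝ V) → ℝ → ℝ := fun i t => α t (bV i) with hψdef
    have hψmem : ∀ i, MemCk0 k a b (ψ i) := fun i =>
      hα.clm_comp (ContinuousLinearMap.apply ℝ ℝ (bV i))
    have hψc : ∀ i, Continuous (ψ i) := fun i => (hψmem i).1.continuous
    have hdecomp : α = ∑ i, fun t => ψ i t • ε i := by
      funext t
      rw [Finset.sum_apply]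
      apply ContinuousLinearMap.ext
      intro v
      rw [ContinuousLinearMap.sum_apply]
      simp only [ContinuousLinearMap.smul_apply]
      conv_lhs => rw [← bV.sum_repr v]
      rw [map_sum]
      refine Finset.sum_congr rfl fun i _ => ?_
      rw [_root_.map_smul]
      have hεv : (ε i) v = bV.repr v i := by
        simp [ε, Module.Basis.coord_apply]
      rw [hεv]
      simp only [smul_eq_mul, ψ]
      ring
    have hsum : f α = ∑ i, f (fun t => ψ i t • ε i) := by
      conv_lhs => rw [hdecomp]
      exact hf.map_sum Finset.univ _ fun i _ => hsm i (ψ i) (hψmem i)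
    have hint : ∀ i, Integrable (fun t => ψ i t * G i t) μ := fun i =>
      integrable_mul_of_memL2 (memL2_Icc_of_continuous (hψc i)) (hG i)
    have h3 : f α = ∫ t in Set.Icc a b, (∑ i, ψ i t * G i t) ∂volume := by
      rw [hsum]
      rw [show (∫ t in Set.Icc a b, (∑ i, ψ i t * G i t) ∂volume)
          = ∑ i, ∫ t in Set.Icc a b, ψ i t * G i t ∂volume from
        integral_finset_sum Finset.univ fun i _ => hint i]
      exact Finset.sum_congr rfl fun i _ => hGrep i (ψ i) (hψmem i)
    have h4 : ∀ t, (∑ i, ψ i t * G i t) = α t (∑ i, G i t • bV i) := by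
      intro t
      rw [map_sum]
      refine Finset.sum_congr rfl fun i _ => ?_
      rw [_root_.map_smul]
      simp only [smul_eq_mul, ψ]
      ring
    rw [h3]
    rw [show (∫ t in Set.Icc a b, (∑ i, ψ i t * G i t) ∂volume)
        = ∫ t in Set.Icc a b, α t (∑ i, G i t • bV i) ∂volume from
      integral_congr_ae (Filter.Eventually.of_forall fun t => h4 t)]
    rw [MeasureTheory.integral_Icc_eq_integral_Ioc,
      ← intervalIntegral.integral_of_le hab.le]
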